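/- arXiv:1906.04523 — 3 statements merged into one kernel-verified Lean document; each statement's English description precedes it below -/
import Mathlib

section
/- For every integer k ≥ 1 and every n with n = 4k, n = 4k+1, n = 4k+2, or n = 4k+3, the minimum of the dominator chromatic number χ_d(D) over all orientations D of the path P_n equals k+2 if n = 4k, k+2 if n = 4k+1, k+3 if n = 4k+2, and k+3 if n = 4k+3, with the single exception n = 6, for which the minimum equals 3. -/
/-- A vertex `v` dominates the color class of color `a` under coloring `c`:
the class is nonempty and every vertex of that color is an out-neighbor of `v`. -/
def Dominates {V α : Type*} (A : V → V → Prop) (c : V → α) (v : V) (a : α) : Prop :=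
  (∃ w, c w = a) ∧ ∀ w, c w = a → A v w

/-- A dominator coloring of the digraph with arc relation `A`: a proper coloring
such that every vertex with positive out-degree dominates some color class. -/
def IsDominatorColoring {V α : Type*} (A : V → V → Prop) (c : V → α) : Prop :=
  (∀ u v, A u v → c u ≠ c v) ∧ ∀ v, (∃ w, A v w) → ∃ a, Dominates A c v a

/-- The dominator chromatic number: the least `k` admitting a dominator coloring
with colors in `Fin k`. -/
noncomputable def domChrom {V : Type*} (A : V → V → Prop) : ℕ :=
  sInf {k | ∃ c : V → Fin k, IsDominatorColoring A c}

/-- The arc relation of the orientation of the path `P_n` (vertices `0,…,n-1`)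
determined by `o`: the edge between `i` and `i+1` is directed `i → i+1`
when `o i = true` and `i+1 → i` when `o i = false`. -/
def pathArc (n : ℕ) (o : ℕ → Bool) (u v : Fin n) : Prop :=
  ((u : ℕ) + 1 = (v : ℕ) ∧ o u = true) ∨ ((v : ℕ) + 1 = (u : ℕ) ∧ o v = false)

/-- The minimum of the dominator chromatic number over all orientations of `P_n`. -/
noncomputable def minDomChromPath (n : ℕ) : ℕ :=
  sInf {m | ∃ o : ℕ → Bool, m = domChrom (pathArc n o)}

/-!
The sinks of an orientation of `P_n` are independent, so there are at most `⌈n/2⌉` of them, and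
every other vertex dominates a colour class. A dominated class lies in an out-neighbourhood, so it
has one or two vertices; a singleton is dominated only by its (at most two) neighbours and a pair
only by its (at most one) common neighbour. Hence a dominated class together with its dominators
has at most three vertices. Counting the non-sinks through their dominated classes and all
vertices through their classes, with every undominated class independent, gives the lower bound,
except for `n = 4`, which is checked exhaustively, and `n = 7`, where the sinks and the only
undominated class would both be the even vertices, leaving no room for a dominator.

For the upper bound, orient every edge from its odd end to its even end, give the odd vertices
one colour and make the even vertices `≡ 2 (mod 4)` singleton classes, each dominated by both of
its neighbours; the remaining even vertices share one more colour.
-/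

open Finset SimpleGraph

section DominatorColoring

variable {V α : Type*} {A : V → V → Prop} {c : V → α}

lemma IsDominatorColoring.comp_injective {β : Type*} (hc : IsDominatorColoring A c) {f : α → β}
    (hf : f.Injective) : IsDominatorColoring A (f ∘ c) := by
  refine ⟨fun u v huv h => hc.1 u v huv (hf h), fun v hv => ?_⟩
  obtain ⟨a, ⟨w, hw⟩, hall⟩ := hc.2 v hv
  exact ⟨f a, ⟨w, congrArg f hw⟩, fun u hu => hall u (hf hu)⟩

lemma exists_isDominatorColoring_of_irrefl [Fintype V] (hA : ∀ v, ¬ A v v) :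
    ∃ c : V → Fin (Fintype.card V), IsDominatorColoring A c := by
  set e := Fintype.equivFin V
  refine ⟨e, fun u v huv h => hA u (by rwa [e.injective h] at huv ⊢), fun v ⟨w, hw⟩ => ?_⟩
  exact ⟨e w, ⟨w, rfl⟩, fun u hu => by rwa [e.injective hu]⟩

lemma domChrom_le {t : ℕ} {c : V → Fin t} (hc : IsDominatorColoring A c) : domChrom A ≤ t :=
  Nat.sInf_le ⟨c, hc⟩

variable [Fintype V]

section Finsets

open scoped Classical

variable (A c)

noncomputable def colorClass (a : α) : Finset V := univ.filter (c · = a)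

noncomputable def dominators (a : α) : Finset V := univ.filter (Dominates A c · a)

noncomputable def sinks : Finset V := univ.filter fun v => ∀ w, ¬ A v w

noncomputable def dominatedColors [Fintype α] : Finset α :=
  univ.filter fun a => ∃ v, Dominates A c v a

end Finsets

@[simp] lemma mem_colorClass {a : α} {v : V} : v ∈ colorClass c a ↔ c v = a := by
  simp [colorClass]

@[simp] lemma mem_dominators {a : α} {v : V} : v ∈ dominators A c a ↔ Dominates A c v a := by
  simp [dominators]

@[simp] lemma mem_sinks {v : V} : v ∈ sinks A ↔ ∀ w, ¬ A v w := by
  simp [sinks]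

@[simp] lemma mem_dominatedColors [Fintype α] {a : α} :
    a ∈ dominatedColors A c ↔ ∃ v, Dominates A c v a := by
  simp [dominatedColors]

lemma sum_card_colorClass [Fintype α] : ∑ a, #(colorClass c a) = Fintype.card V := by
  classical
  rw [← card_univ, card_eq_sum_card_fiberwise (fun v _ => mem_univ (c v))]
  simp [colorClass]

lemma card_le_card_sinks_add_sum_card_dominators [Fintype α] (hc : IsDominatorColoring A c) :
    Fintype.card V ≤ #(sinks A) + ∑ a ∈ dominatedColors A c, #(dominators A c a) := by
  classical
  have hcover : univ ⊆ sinks A ∪ (dominatedColors A c).biUnion (dominators A c) := by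
    intro v _
    by_cases hv : ∃ w, A v w
    · obtain ⟨a, ha⟩ := hc.2 v hv
      exact mem_union_right _
        (mem_biUnion.2 ⟨a, mem_dominatedColors.2 ⟨v, ha⟩, mem_dominators.2 ha⟩)
    · exact mem_union_left _ (mem_sinks.2 (by simpa using hv))
  calc Fintype.card V ≤ #(sinks A ∪ (dominatedColors A c).biUnion (dominators A c)) :=
        card_le_card hcover
    _ ≤ _ := (card_union_le _ _).trans (Nat.add_le_add_left card_biUnion_le _)

lemma card_dominatedColors_le_sum_card_dominators [Fintype α] :
    #(dominatedColors A c) ≤ ∑ a ∈ dominatedColors A c, #(dominators A c a) := by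
  have h (a) (ha : a ∈ dominatedColors A c) : 1 ≤ #(dominators A c a) := by
    obtain ⟨v, hv⟩ := mem_dominatedColors.1 ha
    exact card_pos.2 ⟨v, mem_dominators.2 hv⟩
  simpa using card_nsmul_le_sum _ _ 1 h

lemma card_dominatedColors_le_sum_card_colorClass [Fintype α] :
    #(dominatedColors A c) ≤ ∑ a ∈ dominatedColors A c, #(colorClass c a) := by
  have h (a) (ha : a ∈ dominatedColors A c) : 1 ≤ #(colorClass c a) := by
    obtain ⟨v, ⟨w, hw⟩, -⟩ := mem_dominatedColors.1 ha
    exact card_pos.2 ⟨w, mem_colorClass.2 hw⟩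
  simpa using card_nsmul_le_sum _ _ 1 h

end DominatorColoring

section PathOrientation

variable {n : ℕ} {o : ℕ → Bool}

lemma pathArc_congr {o' : ℕ → Bool} (h : ∀ i < n, o i = o' i) :
    pathArc n o = pathArc n o' := by
  funext u v
  simp only [pathArc, h u u.isLt, h v v.isLt]

lemma pathArc.adj {u v : Fin n} (h : pathArc n o u v) : (pathGraph n).Adj u v :=
  pathGraph_adj.2 (h.imp And.left And.left)

lemma pathArc_irrefl (v : Fin n) : ¬ pathArc n o v v := fun h => h.adj.ne rfl

lemma pathArc_or_pathArc_of_adj {u v : Fin n} (h : (pathGraph n).Adj u v) :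
    pathArc n o u v ∨ pathArc n o v u := by
  rcases pathGraph_adj.1 h with h | h <;> cases ho : o _
  · exact Or.inr (Or.inr ⟨h, ho⟩)
  · exact Or.inl (Or.inl ⟨h, ho⟩)
  · exact Or.inl (Or.inr ⟨h, ho⟩)
  · exact Or.inr (Or.inl ⟨h, ho⟩)

lemma isIndepSet_sinks : (pathGraph n).IsIndepSet (sinks (pathArc n o) : Set (Fin n)) := by
  intro u hu v hv _ huv
  rcases pathArc_or_pathArc_of_adj (o := o) huv with h | h
  · exact mem_sinks.1 hu v h
  · exact mem_sinks.1 hv u h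

lemma isIndepSet_colorClass {α : Type*} {c : Fin n → α}
    (hc : ∀ u v, pathArc n o u v → c u ≠ c v) (a : α) :
    (pathGraph n).IsIndepSet (colorClass c a : Set (Fin n)) := by
  intro u hu v hv _ huv
  have hcuv : c u = c v := (mem_colorClass.1 hu).trans (mem_colorClass.1 hv).symm
  rcases pathArc_or_pathArc_of_adj (o := o) huv with h | h
  · exact hc u v h hcuv
  · exact hc v u h hcuv.symm

end PathOrientation

section PathGraph

variable {n : ℕ}

lemma two_mul_card_le_of_isIndepSet {T : Finset (Fin n)}
    (hT : (pathGraph n).IsIndepSet (T : Set (Fin n))) : 2 * #T ≤ n + 1 := by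
  have : #T ≤ #(range ((n + 1) / 2)) := by
    refine card_le_card_of_injOn (fun v => (v : ℕ) / 2) (fun v _ => ?_) fun u hu v hv huv => ?_
    · simp only [coe_range, Set.mem_Iio]; omega
    · by_contra hne
      exact hT hu hv hne (pathGraph_adj.2 (by simp only at huv; omega))
  rw [card_range] at this
  omega

lemma mem_of_isIndepSet_of_even {m : ℕ} {T : Finset (Fin (2 * m + 1))}
    (hT : (pathGraph (2 * m + 1)).IsIndepSet (T : Set (Fin (2 * m + 1)))) (hcard : #T = m + 1)
    {x : Fin (2 * m + 1)} (hx : Even (x : ℕ)) : x ∈ T := by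
  by_contra hxT
  have hval (v) (hv : v ∈ T) : (v : ℕ) ≠ x := Fin.val_ne_of_ne fun h => hxT (h ▸ hv)
  obtain ⟨j, hj⟩ := hx
  -- Halving, rounded down below `x` and up above `x`, is injective on `T` and misses `j = x / 2`.
  have : #T ≤ #((range (m + 1)).erase j) := by
    refine card_le_card_of_injOn (fun v => if v < x then (v : ℕ) / 2 else ((v : ℕ) + 1) / 2)
      (fun v hv => ?_) fun u hu v hv huv => ?_
    · have := hval v hv
      simp only [coe_erase, coe_range, Set.mem_sdiff, Set.mem_Iio, Set.mem_singleton_iff,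
        Fin.lt_def]
      split_ifs <;> omega
    · by_contra hne
      have := hval u hu
      have := hval v hv
      have := Fin.val_ne_of_ne hne
      refine hT hu hv hne (pathGraph_adj.2 ?_)
      simp only [Fin.lt_def] at huv
      split_ifs at huv <;> omega
  rw [card_erase_of_mem (mem_range.2 (by omega)), card_range] at this
  omega

lemma card_le_two_of_forall_adj {T : Finset (Fin n)} {x : Fin n}
    (hT : ∀ y ∈ T, (pathGraph n).Adj x y) : #T ≤ 2 := by
  calc #T ≤ #({(x : ℕ) - 1, (x : ℕ) + 1} : Finset ℕ) := by
        refine card_le_card_of_injOn Fin.val (fun y hy => ?_) Fin.val_injective.injOn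
        have := pathGraph_adj.1 (hT y hy)
        simp only [coe_insert, coe_singleton, Set.mem_insert_iff, Set.mem_singleton_iff]
        omega
    _ ≤ 2 := card_le_two

lemma card_le_one_of_forall_adj_adj {T : Finset (Fin n)} {w₁ w₂ : Fin n} (hne : w₁ ≠ w₂)
    (hT : ∀ y ∈ T, (pathGraph n).Adj y w₁ ∧ (pathGraph n).Adj y w₂) : #T ≤ 1 := by
  refine card_le_one.2 fun u hu v hv => Fin.ext ?_
  have := Fin.val_ne_of_ne hne
  have h₁ := pathGraph_adj.1 (hT u hu).1
  have h₂ := pathGraph_adj.1 (hT u hu).2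
  have h₃ := pathGraph_adj.1 (hT v hv).1
  have h₄ := pathGraph_adj.1 (hT v hv).2
  omega

end PathGraph

section LowerBound

variable {n : ℕ} {o : ℕ → Bool} {α : Type*} {c : Fin n → α}

lemma card_colorClass_add_card_dominators_le_three {v : Fin n} {a : α}
    (hv : Dominates (pathArc n o) c v a) :
    #(colorClass c a) + #(dominators (pathArc n o) c a) ≤ 3 := by
  obtain ⟨⟨w, hw⟩, hall⟩ := hv
  have hcls : #(colorClass c a) ≤ 2 :=
    card_le_two_of_forall_adj fun y hy => (hall y (mem_colorClass.1 hy)).adj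
  have hpos : 0 < #(colorClass c a) := card_pos.2 ⟨w, mem_colorClass.2 hw⟩
  have hdom_adj :
      ∀ u ∈ dominators (pathArc n o) c a, ∀ y, c y = a → (pathGraph n).Adj u y :=
    fun u hu y hy => (mem_dominators.1 hu).2 y hy |>.adj
  obtain h1 | h2 : #(colorClass c a) = 1 ∨ #(colorClass c a) = 2 := by omega
  · obtain ⟨z, hz⟩ := card_eq_one.1 h1
    have hcz : c z = a := mem_colorClass.1 (hz ▸ mem_singleton_self z)
    have := card_le_two_of_forall_adj fun u hu => (hdom_adj u hu z hcz).symm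
    omega
  · obtain ⟨w₁, w₂, hne, hw⟩ := card_eq_two.1 h2
    have h₁ : c w₁ = a := mem_colorClass.1 (by simp [hw])
    have h₂ : c w₂ = a := mem_colorClass.1 (by simp [hw])
    have := card_le_one_of_forall_adj_adj hne fun u hu =>
      ⟨hdom_adj u hu w₁ h₁, hdom_adj u hu w₂ h₂⟩
    omega

lemma sum_card_colorClass_add_sum_card_dominators_le [Fintype α] :
    ∑ a ∈ dominatedColors (pathArc n o) c, #(colorClass c a) +
      ∑ a ∈ dominatedColors (pathArc n o) c, #(dominators (pathArc n o) c a) ≤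
      3 * #(dominatedColors (pathArc n o) c) := by
  rw [← sum_add_distrib, mul_comm, ← smul_eq_mul]
  refine sum_le_card_nsmul _ _ _ fun a ha => ?_
  obtain ⟨v, hv⟩ := mem_dominatedColors.1 ha
  exact card_colorClass_add_card_dominators_le_three hv

lemma not_isDominatorColoring_pathArc_four {t : ℕ} (ht : t ≤ 2) (c : Fin 4 → Fin t) :
    ¬ IsDominatorColoring (pathArc 4 o) c := by
  suffices h : ∀ (b : Fin 4 → Bool) (c : Fin 4 → Fin 2),
      ¬ IsDominatorColoring (pathArc 4 fun i => b (Fin.ofNat 4 i)) c by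
    rw [pathArc_congr (o' := fun i => (fun j : Fin 4 => o j) (Fin.ofNat 4 i)) fun i hi => by
      simp [Nat.mod_eq_of_lt hi]]
    exact fun hc => h (fun j => o j) _ (hc.comp_injective (Fin.castLE_injective ht))
  unfold IsDominatorColoring Dominates pathArc
  decide

-- The sinks and the class of `x` are then both the set of even vertices.
lemma dominates_eq_of_card_sinks_eq_four {c : Fin 7 → α} {x b : α} {v : Fin 7}
    (hS : #(sinks (pathArc 7 o)) = 4) (hX : #(colorClass c x) = 4)
    (hc : ∀ u v, pathArc 7 o u v → c u ≠ c v) (hv : Dominates (pathArc 7 o) c v b) :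
    b = x := by
  by_contra hbx
  obtain ⟨⟨w, hw⟩, hall⟩ := hv
  have hw_odd : ¬ Even (w : ℕ) := fun he => hbx <| hw ▸ mem_colorClass.1
    (mem_of_isIndepSet_of_even (m := 3) (isIndepSet_colorClass hc x) hX he)
  have hv_even : Even (v : ℕ) := by
    have := pathGraph_adj.1 (hall w hw).adj
    rw [Nat.even_iff] at hw_odd ⊢
    omega
  exact mem_sinks.1 (mem_of_isIndepSet_of_even (m := 3) isIndepSet_sinks hS hv_even) w (hall w hw)

end LowerBound

def domChromPathBound (n : ℕ) : ℕ :=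
  if n = 6 then 3 else n / 4 + 2 + n % 4 / 2

theorem domChromPathBound_le {n t : ℕ} {o : ℕ → Bool} {c : Fin n → Fin t} (hn : 4 ≤ n)
    (hc : IsDominatorColoring (pathArc n o) c) : domChromPathBound n ≤ t := by
  rcases eq_or_ne n 4 with rfl | h4
  · by_contra! ht
    rw [domChromPathBound, if_neg (by omega)] at ht
    exact not_isDominatorColoring_pathArc_four (by omega) c hc
  have hsinks := two_mul_card_le_of_isIndepSet (isIndepSet_sinks (n := n) (o := o))
  have hcover : n ≤ #(sinks (pathArc n o)) +
      ∑ a ∈ dominatedColors (pathArc n o) c, #(dominators (pathArc n o) c a) := by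
    simpa using card_le_card_sinks_add_sum_card_dominators hc
  have hweight := sum_card_colorClass_add_sum_card_dominators_le (o := o) (c := c)
  have hdom := card_dominatedColors_le_sum_card_dominators (A := pathArc n o) (c := c)
  have hcls := card_dominatedColors_le_sum_card_colorClass (A := pathArc n o) (c := c)
  set D := dominatedColors (pathArc n o) c
  have htotal : ∑ a ∈ univ \ D, #(colorClass c a) + ∑ a ∈ D, #(colorClass c a) = n := by
    rw [sum_sdiff (subset_univ D)]
    simpa using sum_card_colorClass (c := c)
  have hcompl : #(univ \ D) + #D = t := by
    simpa using card_sdiff_add_card_eq_card (subset_univ D)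
  rw [domChromPathBound]
  obtain h0 | h1 | h2 : #(univ \ D) = 0 ∨ #(univ \ D) = 1 ∨ 2 ≤ #(univ \ D) := by omega
  · rw [card_eq_zero.1 h0, sum_empty] at htotal
    split_ifs <;> omega
  · obtain ⟨x, hx⟩ := card_eq_one.1 h1
    rw [hx, sum_singleton] at htotal
    have hX := two_mul_card_le_of_isIndepSet (isIndepSet_colorClass hc.1 x)
    rcases eq_or_ne n 7 with rfl | h7
    · rw [if_neg (by omega)]
      by_contra! ht
      have hxD : x ∉ D := (mem_sdiff.1 (hx ▸ mem_singleton_self x)).2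
      have hD_empty : D = ∅ := eq_empty_of_forall_notMem fun a ha => by
        obtain ⟨v, hv⟩ := mem_dominatedColors.1 ha
        exact hxD (dominates_eq_of_card_sinks_eq_four (x := x) (by omega) (by omega) hc.1 hv ▸ ha)
      simp only [hD_empty, card_empty, sum_empty] at *
      omega
    · split_ifs <;> omega
  · split_ifs <;> omega

def alternatingOrientation : ℕ → Bool := fun i => decide (i % 2 = 1)

section UpperBound

variable {n t : ℕ}

lemma pathArc_alternatingOrientation_iff {u v : Fin n} :
    pathArc n alternatingOrientation u v ↔ (pathGraph n).Adj u v ∧ (u : ℕ) % 2 = 1 := by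
  simp only [pathArc, alternatingOrientation, pathGraph_adj, decide_eq_true_eq,
    decide_eq_false_iff_not]
  omega

lemma exists_isDominatorColoring_alternatingOrientation (f : ℕ → ℕ) (hf : ∀ v < n, f v < t)
    (hproper : ∀ u v, u % 2 = 1 → v % 2 = 0 → f u ≠ f v)
    (hdom : ∀ v < n, v % 2 = 1 → ∃ w < n, ∀ u < n, f u = f w → u + 1 = v ∨ v + 1 = u) :
    ∃ c : Fin n → Fin t, IsDominatorColoring (pathArc n alternatingOrientation) c := by
  refine ⟨fun v => ⟨f v, hf v v.isLt⟩, fun u v huv h => ?_, fun v ⟨w, hw⟩ => ?_⟩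
  · obtain ⟨hadj, hu⟩ := pathArc_alternatingOrientation_iff.1 huv
    have := pathGraph_adj.1 hadj
    exact hproper u v hu (by omega) (congrArg Fin.val h)
  · have hv := (pathArc_alternatingOrientation_iff.1 hw).2
    obtain ⟨w, hw, hall⟩ := hdom v v.isLt hv
    refine ⟨⟨f w, hf w hw⟩, ⟨⟨w, hw⟩, rfl⟩, fun u hu => ?_⟩
    exact pathArc_alternatingOrientation_iff.2
      ⟨pathGraph_adj.2 (hall u u.isLt (congrArg Fin.val hu)).symm, hv⟩

theorem exists_isDominatorColoring_domChromPathBound (hn : 4 ≤ n) :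
    ∃ c : Fin n → Fin (domChromPathBound n),
      IsDominatorColoring (pathArc n alternatingOrientation) c := by
  by_cases h2 : n % 4 = 2
  · -- The last odd vertex sees only `n - 2 ≡ 0 (mod 4)`, so the residues `0` and `2` swap roles,
    -- and `{0, 2}` becomes an extra class, dominated by `1`.
    refine exists_isDominatorColoring_alternatingOrientation
      (fun v => if v % 2 = 1 then 0 else if v ≤ 2 then 1 else if v % 4 = 0 then v / 4 + 1
        else n / 4 + 2) (fun v hv => ?_) (fun u v hu hv => ?_) fun v hv hodd => ?_
    · simp only [domChromPathBound]; split_ifs <;> omega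
    · split_ifs <;> omega
    · refine ⟨if v % 4 = 3 then v + 1 else v - 1, by split_ifs <;> omega, fun u hu hfu => ?_⟩
      split_ifs at hfu ⊢ <;> omega
  · refine exists_isDominatorColoring_alternatingOrientation
      (fun v => if v % 2 = 1 then 0 else if v % 4 = 2 then v / 4 + 2 else 1)
      (fun v hv => ?_) (fun u v hu hv => ?_) fun v hv hodd => ?_
    · simp only [domChromPathBound]; split_ifs <;> omega
    · split_ifs <;> omega
    · refine ⟨if v % 4 = 1 then v + 1 else v - 1, by split_ifs <;> omega, fun u hu hfu => ?_⟩
      split_ifs at hfu ⊢ <;> omega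

end UpperBound

theorem minDomChromPath_eq_domChromPathBound {n : ℕ} (hn : 4 ≤ n) :
    minDomChromPath n = domChromPathBound n := by
  have hlower (o : ℕ → Bool) : domChromPathBound n ≤ domChrom (pathArc n o) := by
    obtain ⟨c, hc⟩ := exists_isDominatorColoring_of_irrefl (pathArc_irrefl (o := o))
    exact le_csInf ⟨_, c, hc⟩ fun t ⟨c, hc⟩ => domChromPathBound_le hn hc
  obtain ⟨c, hc⟩ := exists_isDominatorColoring_domChromPathBound hn
  refine le_antisymm (Nat.sInf_le ⟨alternatingOrientation, ?_⟩) ?_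
  · exact le_antisymm (domChrom_le hc) (hlower _) |>.symm
  · exact le_csInf ⟨_, alternatingOrientation, rfl⟩ fun m ⟨o, hm⟩ => hm ▸ hlower o

theorem min_domChrom_orientations_of_path (k n : ℕ) (hk : 1 ≤ k)
    (hn : n = 4 * k ∨ n = 4 * k + 1 ∨ n = 4 * k + 2 ∨ n = 4 * k + 3) :
    minDomChromPath n =
      if n = 6 then 3
      else if n = 4 * k ∨ n = 4 * k + 1 then k + 2
      else k + 3 := by
  rw [minDomChromPath_eq_domChromPathBound (by omega), domChromPathBound]
  split_ifs <;> omega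
end

section
/- For every integer n ≥ 4 with n ≠ 6, there exists an orientation D of the path P_n with χ_d(D) ≤ f(n), where f(4k) = k+2, f(4k+1) = k+2, f(4k+2) = k+3, and f(4k+3) = k+3 for k ≥ 1. -/
/-!
Orient every edge of `P_n` from its odd endpoint to its even endpoint, so that only odd vertices
have out-neighbors. Color all odd vertices alike and all even vertices alike, except that the
even vertices `v ≡ r (mod 4)` receive their own singleton classes. With `r = 0` when
`n ≡ 2 (mod 4)` and `r = 2` otherwise, every odd vertex is adjacent to such a singleton, which it
then dominates; there are at most `(n + 2) / 4` of them, so `(n + 2) / 4 + 2` colors suffice.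
-/

theorem domChrom_le_of_isDominatorColoring {V : Type*} {A : V → V → Prop} {k : ℕ}
    {c : V → Fin k} (hc : IsDominatorColoring A c) : domChrom A ≤ k :=
  Nat.sInf_le ⟨c, hc⟩

theorem isDominatorColoring_of_forall_singleton {V α : Type*} {A : V → V → Prop} {c : V → α}
    (hproper : ∀ u v, A u v → c u ≠ c v)
    (hsingleton : ∀ v, (∃ w, A v w) → ∃ w, A v w ∧ ∀ u, c u = c w → u = w) :
    IsDominatorColoring A c := by
  refine ⟨hproper, fun v hv => ?_⟩
  obtain ⟨w, hvw, hw⟩ := hsingleton v hv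
  exact ⟨c w, ⟨w, rfl⟩, fun u hu => hw u hu ▸ hvw⟩

def oddToEven (i : ℕ) : Bool :=
  decide (i % 2 = 1)

theorem pathArc_oddToEven_iff {n : ℕ} {u v : Fin n} :
    pathArc n oddToEven u v ↔ (u : ℕ) % 2 = 1 ∧ ((u : ℕ) + 1 = v ∨ (v : ℕ) + 1 = u) := by
  simp only [pathArc, oddToEven, decide_eq_true_eq, decide_eq_false_iff_not]
  omega

def pathColor (r v : ℕ) : ℕ :=
  if v % 2 = 1 then 0 else if v % 4 = r then v / 4 + 2 else 1

theorem pathColor_ne_of_odd_of_even {r u v : ℕ} (hu : u % 2 = 1) (hv : v % 2 = 0) :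
    pathColor r u ≠ pathColor r v := by
  unfold pathColor
  split_ifs <;> omega

theorem eq_of_pathColor_eq {r s w : ℕ} (hs : s % 2 = 0) (hsr : s % 4 = r)
    (h : pathColor r w = pathColor r s) : w = s := by
  unfold pathColor at h
  split_ifs at h <;> omega

theorem domChrom_pathArc_oddToEven_le_of_mod_four (n r K : ℕ) (hK : 2 ≤ K)
    (hKr : ∀ v < n, v % 4 = r → v / 4 + 2 < K)
    (hadj : ∀ v < n, v % 2 = 1 → ∃ s < n, s % 4 = r ∧ (v + 1 = s ∨ s + 1 = v)) :
    domChrom (pathArc n oddToEven) ≤ K := by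
  have hlt : ∀ v < n, pathColor r v < K := by
    intro v hv
    unfold pathColor
    split_ifs with hodd hmod
    exacts [by omega, hKr v hv hmod, by omega]
  refine domChrom_le_of_isDominatorColoring (c := fun v => ⟨pathColor r v, hlt v v.2⟩) ?_
  refine isDominatorColoring_of_forall_singleton ?_ ?_
  · intro u v huv hc
    obtain ⟨hu, hvu⟩ := pathArc_oddToEven_iff.mp huv
    exact pathColor_ne_of_odd_of_even hu (by omega) (congrArg Fin.val hc)
  · rintro v ⟨w, hvw⟩
    have hv := (pathArc_oddToEven_iff.mp hvw).1
    obtain ⟨s, hsn, hsr, hvs⟩ := hadj v v.2 hv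
    have hs : s % 2 = 0 := by omega
    refine ⟨⟨s, hsn⟩, pathArc_oddToEven_iff.mpr ⟨hv, hvs⟩, fun u hu => Fin.ext ?_⟩
    exact eq_of_pathColor_eq hs hsr (congrArg Fin.val hu)

theorem domChrom_pathArc_oddToEven_le (n : ℕ) :
    domChrom (pathArc n oddToEven) ≤ (n + 2) / 4 + 2 := by
  by_cases hn : n % 4 = 2
  · refine domChrom_pathArc_oddToEven_le_of_mod_four n 0 _ (by omega) (fun v hv _ => by omega) ?_
    intro v hv hodd
    rcases (by omega : v % 4 = 1 ∨ v % 4 = 3) with h | h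
    · exact ⟨v - 1, by omega, by omega, Or.inr (by omega)⟩
    · exact ⟨v + 1, by omega, by omega, Or.inl rfl⟩
  · refine domChrom_pathArc_oddToEven_le_of_mod_four n 2 _ (by omega) (fun v hv _ => by omega) ?_
    intro v hv hodd
    rcases (by omega : v % 4 = 1 ∨ v % 4 = 3) with h | h
    · exact ⟨v + 1, by omega, by omega, Or.inl rfl⟩
    · exact ⟨v - 1, by omega, by omega, Or.inr (by omega)⟩

theorem domChrom_orientations_of_path_upper_bound_general (n k : ℕ) :
    ∃ o : ℕ → Bool,
      (n = 4 * k → domChrom (pathArc n o) ≤ k + 2) ∧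
      (n = 4 * k + 1 → domChrom (pathArc n o) ≤ k + 2) ∧
      (n = 4 * k + 2 → domChrom (pathArc n o) ≤ k + 3) ∧
      (n = 4 * k + 3 → domChrom (pathArc n o) ≤ k + 3) := by
  refine ⟨oddToEven, ?_, ?_, ?_, ?_⟩ <;> rintro rfl <;>
    exact (domChrom_pathArc_oddToEven_le _).trans (by omega)

theorem domChrom_orientations_of_path_upper_bound (n k : ℕ) (hn : 4 ≤ n) (hn6 : n ≠ 6)
    (hk : 1 ≤ k) :
    ∃ o : ℕ → Bool,
      (n = 4 * k → domChrom (pathArc n o) ≤ k + 2) ∧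
      (n = 4 * k + 1 → domChrom (pathArc n o) ≤ k + 2) ∧
      (n = 4 * k + 2 → domChrom (pathArc n o) ≤ k + 3) ∧
      (n = 4 * k + 3 → domChrom (pathArc n o) ≤ k + 3) :=
  domChrom_orientations_of_path_upper_bound_general n k
end

section
/- For every real number M > 0 there exists a finite digraph D with at least one arc such that χ_d(D) > M · Δ(D), where Δ(D) denotes the maximum degree of D (the maximum over vertices of the sum of in-degree and out-degree). Consequently, the ratio χ_d(D)/Δ(D) is unbounded over all finite digraphs. -/
/-!
In the digraph `k K₂` (a perfect matching of `k` arcs) every vertex has total degree one.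
Each head is the only out-neighbour of its tail, so in a dominator coloring each head forms a
colour class by itself, and the tails need yet another colour: `χ_d ≥ k + 1` while `Δ = 1`.
-/

open Finset Function

section DominatorColoring

variable {V α : Type*} {A : V → V → Prop}

theorem isDominatorColoring_of_injective (hA : ∀ v, ¬A v v) {c : V → α} (hc : Injective c) :
    IsDominatorColoring A c := by
  refine ⟨fun u v huv hcuv => hA u (hc hcuv ▸ huv), fun v ⟨w, hvw⟩ => ⟨c w, ⟨w, rfl⟩, ?_⟩⟩
  intro x hx
  rwa [hc hx]

theorem exists_isDominatorColoring [Finite V] (hA : ∀ v, ¬A v v) :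
    ∃ (k : ℕ) (c : V → Fin k), IsDominatorColoring A c := by
  obtain ⟨k, ⟨e⟩⟩ := Finite.exists_equiv_fin V
  exact ⟨k, e, isDominatorColoring_of_injective hA e.injective⟩

theorem IsDominatorColoring.eq_of_color_eq_of_unique_out {c : V → α}
    (hc : IsDominatorColoring A c) {v s : V} (hv : ∀ w, A v w ↔ w = s) {x : V}
    (hx : c x = c s) : x = s := by
  obtain ⟨a, ⟨y, hy⟩, hdom⟩ := hc.2 v ⟨s, (hv s).2 rfl⟩
  have hys : y = s := (hv y).1 (hdom y hy)
  subst hys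
  exact (hv x).1 (hdom x (hx.trans hy))

theorem IsDominatorColoring.card_add_one_le {m : ℕ} {c : V → Fin m}
    (hc : IsDominatorColoring A c) {S : Finset V} {x : V} (hx : x ∉ S)
    (hS : ∀ s ∈ S, ∃ v, ∀ w, A v w ↔ w = s) : #S + 1 ≤ m := by
  have hinj : Set.InjOn c ↑(S.cons x hx) := by
    intro a ha b hb hab
    have singleton_class : ∀ s ∈ S, ∀ y, c y = c s → y = s := fun s hs y hy =>
      have ⟨_, hv⟩ := hS s hs
      hc.eq_of_color_eq_of_unique_out hv hy
    rcases mem_cons.1 ha with rfl | ha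
    · rcases mem_cons.1 hb with rfl | hb
      · rfl
      · exact singleton_class b hb a hab
    · exact (singleton_class a ha b hab.symm).symm
  simpa [card_cons] using card_le_card_of_injOn c (fun _ _ => mem_univ _) hinj

theorem card_add_one_le_domChrom [Finite V] (hA : ∀ v, ¬A v v) {S : Finset V} {x : V}
    (hx : x ∉ S) (hS : ∀ s ∈ S, ∃ v, ∀ w, A v w ↔ w = s) : #S + 1 ≤ domChrom A := by
  obtain ⟨k, c, hc⟩ := exists_isDominatorColoring hA
  exact le_csInf ⟨k, c, hc⟩ fun m ⟨c, hc⟩ => hc.card_add_one_le hx hS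

end DominatorColoring

def matchingArc (k : ℕ) (u v : Fin (k + k)) : Bool :=
  decide ((v : ℕ) = u + k)

theorem matchingArc_iff {k : ℕ} {u v : Fin (k + k)} :
    matchingArc k u v = true ↔ (v : ℕ) = u + k :=
  decide_eq_true_iff

theorem maxDegree_matchingArc_le_one (k : ℕ) :
    (univ.sup fun v : Fin (k + k) =>
      #(univ.filter fun w => matchingArc k v w = true) +
      #(univ.filter fun w => matchingArc k w v = true)) ≤ 1 := by
  refine Finset.sup_le fun v _ => ?_
  have hout : #(univ.filter fun w => matchingArc k v w = true) ≤ 1 :=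
    card_le_one.2 fun a ha b hb => by
      simp only [mem_filter, matchingArc_iff] at ha hb
      exact Fin.ext (by omega)
  have hin : #(univ.filter fun w => matchingArc k w v = true) ≤ 1 :=
    card_le_one.2 fun a ha b hb => by
      simp only [mem_filter, matchingArc_iff] at ha hb
      exact Fin.ext (by omega)
  by_cases hv : (v : ℕ) < k
  · have : (univ.filter fun w => matchingArc k w v = true) = ∅ :=
      filter_eq_empty_iff.2 fun w _ => by rw [matchingArc_iff]; omega
    simpa [this] using hout
  · have : (univ.filter fun w => matchingArc k v w = true) = ∅ :=
      filter_eq_empty_iff.2 fun w _ => by have := w.isLt; rw [matchingArc_iff]; omega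
    simpa [this] using hin

theorem succ_le_domChrom_matchingArc {k : ℕ} (hk : 0 < k) :
    k + 1 ≤ domChrom fun u v : Fin (k + k) => matchingArc k u v = true := by
  let heads : Finset (Fin (k + k)) := univ.map (Fin.natAddEmb k)
  have hcard : #heads = k := by simp [heads]
  have tail_notMem : (⟨0, by omega⟩ : Fin (k + k)) ∉ heads := by
    simp only [heads, mem_map, mem_univ, true_and, Fin.natAddEmb_apply, Fin.ext_iff,
      Fin.val_natAdd]
    omega
  have unique_out : ∀ s ∈ heads, ∃ v, ∀ w, matchingArc k v w = true ↔ w = s := by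
    simp only [heads, mem_map, mem_univ, true_and, Fin.natAddEmb_apply, forall_exists_index,
      forall_apply_eq_imp_iff]
    exact fun i => ⟨Fin.castAdd k i, fun w => by simp [matchingArc_iff, Fin.ext_iff, add_comm]⟩
  have loopless (v : Fin (k + k)) : ¬matchingArc k v v = true := by
    rw [matchingArc_iff]; omega
  simpa [hcard] using card_add_one_le_domChrom loopless tail_notMem unique_out

theorem domChrom_over_maxDegree_unbounded :
    ∀ M : ℝ, 0 < M →
      ∃ (n : ℕ) (A : Fin n → Fin n → Bool),
        (∃ u v, A u v = true) ∧
        M * ((Finset.univ.sup fun v : Fin n =>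
              (Finset.univ.filter fun w => A v w = true).card +
              (Finset.univ.filter fun w => A w v = true).card : ℕ) : ℝ) <
          (domChrom (fun u v : Fin n => A u v = true) : ℝ) := by
  intro M hM
  set k := ⌈M⌉₊
  have hk : 0 < k := Nat.ceil_pos.2 hM
  refine ⟨k + k, matchingArc k, ⟨⟨0, by omega⟩, ⟨k, by omega⟩, by simp [matchingArc_iff]⟩, ?_⟩
  have hΔ := maxDegree_matchingArc_le_one k
  have hχ := succ_le_domChrom_matchingArc hk
  calc M * _ ≤ M * 1 := by gcongr; exact_mod_cast hΔ
    _ ≤ k := by simpa using Nat.le_ceil M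
    _ < ((k + 1 : ℕ) : ℝ) := by push_cast; linarith
    _ ≤ _ := by exact_mod_cast hχ
end
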